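/- Let H_3(y) = (y/2 + 1) · ln(1 + (3/y)·(1 + √(2(3+y)/(3(y−2))))). Then H_3 is strictly decreasing on [12, ∞), and H_3(3) > H_3(4) > H_3(5) > H_3(6) > H_3(7) > H_3(8) > H_3(9) > H_3(10) > H_3(11) > H_3(12); consequently, for every integer d2 ≥ 5, H_3(d2) < H_3(d2 − 2). -/

import Mathlib

/-!
`H3` is strictly decreasing on all of `(2, ∞)`, which gives every claim at once. Write
`H3 y = (y/2 + 1) · log F` with `F = 1 + 3(1 + s)/y` and `s = √(2(3+y)/(3(y−2)))`.
The derivative is `log F / 2 + (y/2 + 1) F'/F`, and the bound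
`log F ≤ sinh (log F) = (F − F⁻¹)/2` reduces its negativity to `F² − 1 + (2y + 4) F' < 0`.
Cleared of denominators this reads `3s(1 + s)(3s − 1)(y − 2)² < 10y(y + 2)`, and the relation
`(3s² − 2)(y − 2) = 10` turns it into the positivity of the quartic `12s⁴ − 15s³ + 4s² + 5s + 2`.
-/

/-- `H₃(y) = (y/2 + 1) · ln(1 + (3/y)(1 + √(2(3+y)/(3(y−2)))))`. -/
noncomputable def H3 (y : ℝ) : ℝ :=
  (y / 2 + 1) * Real.log (1 + (3 / y) * (1 + Real.sqrt (2 * (3 + y) / (3 * (y - 2)))))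

open Real

lemma Real.log_le_half_sub_inv {x : ℝ} (hx : 1 ≤ x) : log x ≤ (x - x⁻¹) / 2 := by
  rw [← sinh_log (by positivity)]
  exact self_le_sinh_iff.2 (log_nonneg hx)

lemma log_div_two_add_mul_div_neg {F F' c : ℝ} (hF : 1 ≤ F) (h : F ^ 2 - 1 + 4 * c * F' < 0) :
    log F / 2 + c * (F' / F) < 0 := by
  have hF0 : 0 < F := by positivity
  calc log F / 2 + c * (F' / F) ≤ (F - F⁻¹) / 4 + c * (F' / F) := by
        linarith [log_le_half_sub_inv hF]
    _ = (F ^ 2 - 1 + 4 * c * F') / (4 * F) := by field_simp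
    _ < 0 := div_neg_of_neg_of_pos h (by positivity)

lemma quartic_pos (s : ℝ) : 0 < 12 * s ^ 4 - 15 * s ^ 3 + 4 * s ^ 2 + 5 * s + 2 := by
  nlinarith [sq_nonneg (2 * s ^ 2 - s - 1), sq_nonneg (s + 1 / 4)]

lemma mul_sq_lt_of_sq_mul_eq {y s : ℝ} (hrel : 3 * (y - 2) * s ^ 2 = 2 * (3 + y)) :
    3 * s * (1 + s) * (3 * s - 1) * (y - 2) ^ 2 < 10 * y * (y + 2) := by
  -- `D * (y - 2) = 10`, so multiplying by `D ^ 2` leaves polynomials in `s` alone.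
  set D := 3 * s ^ 2 - 2
  have hD : D * (y - 2) = 10 := by linear_combination hrel
  have hyD : y * D = 6 * s ^ 2 + 6 := by linear_combination hrel
  have hy2D : (y + 2) * D = 12 * s ^ 2 + 2 := by linear_combination hrel
  refine lt_of_mul_lt_mul_right ?_ (sq_nonneg D)
  calc 3 * s * (1 + s) * (3 * s - 1) * (y - 2) ^ 2 * D ^ 2
        = 60 * (5 * s * (1 + s) * (3 * s - 1)) := by
          linear_combination (3 * s * (1 + s) * (3 * s - 1) * (D * (y - 2) + 10)) * hD
    _ < 60 * (2 * (s ^ 2 + 1) * (6 * s ^ 2 + 1)) := by linear_combination 60 * quartic_pos s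
    _ = 10 * (y * D) * ((y + 2) * D) := by rw [hyD, hy2D]; ring
    _ = 10 * y * (y + 2) * D ^ 2 := by ring

namespace H3

noncomputable def root (y : ℝ) : ℝ := √(2 * (3 + y) / (3 * (y - 2)))

noncomputable def logArg (y : ℝ) : ℝ := 1 + 3 / y * (1 + root y)

noncomputable def logArgDeriv (y : ℝ) : ℝ :=
  -(3 * (1 + root y) / y ^ 2 + 5 / (y * root y * (y - 2) ^ 2))

variable {y : ℝ}

lemma root_pos (hy : 2 < y) : 0 < root y := by
  unfold root
  have : 0 < y - 2 := by linarith
  positivity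

lemma sq_root_mul (hy : 2 < y) : 3 * (y - 2) * root y ^ 2 = 2 * (3 + y) := by
  have : 0 < y - 2 := by linarith
  rw [root, sq_sqrt (by positivity)]
  field_simp

lemma one_lt_logArg (hy : 2 < y) : 1 < logArg y := by
  have := root_pos hy
  have : 0 < 3 / y * (1 + root y) := by positivity
  unfold logArg
  linarith

lemma hasDerivAt_root (hy : 2 < y) :
    HasDerivAt root (-5 / (3 * root y * (y - 2) ^ 2)) y := by
  have hy2 : 3 * (y - 2) ≠ 0 := by linarith
  have hnum : HasDerivAt (fun z => 2 * (3 + z)) 2 y := by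
    simpa using ((hasDerivAt_id y).const_add 3).const_mul 2
  have hden : HasDerivAt (fun z => 3 * (z - 2)) 3 y := by
    simpa using ((hasDerivAt_id y).sub_const 2).const_mul 3
  have hroot := root_pos hy
  refine ((hnum.div hden hy2).sqrt ?_).congr_deriv ?_
  · exact (sqrt_pos.1 hroot).ne'
  · change _ / (2 * root y) = _
    field_simp
    ring

lemma hasDerivAt_logArg (hy : 2 < y) : HasDerivAt logArg (logArgDeriv y) y := by
  have hy0 : y ≠ 0 := by linarith
  have hinv : HasDerivAt (fun z => 3 / z) (-3 / y ^ 2) y := by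
    simpa [div_eq_mul_inv] using (hasDerivAt_inv hy0).const_mul 3
  refine ((hinv.mul ((hasDerivAt_root hy).const_add 1)).const_add 1).congr_deriv ?_
  have := (root_pos hy).ne'
  unfold logArgDeriv
  field_simp
  ring

lemma hasDerivAt_H3 (hy : 2 < y) :
    HasDerivAt H3 (log (logArg y) / 2 + (y / 2 + 1) * (logArgDeriv y / logArg y)) y := by
  have hlin : HasDerivAt (fun z : ℝ => z / 2 + 1) (1 / 2) y := by
    simpa using ((hasDerivAt_id y).div_const 2).add_const 1
  have hlog := (hasDerivAt_logArg hy).log (zero_lt_one.trans (one_lt_logArg hy)).ne'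
  exact (hlin.mul hlog).congr_deriv (by ring)

lemma logArg_sq_sub_one_add_mul_logArgDeriv (hy : 2 < y) :
    logArg y ^ 2 - 1 + 4 * (y / 2 + 1) * logArgDeriv y =
      (3 * root y * (1 + root y) * (3 * root y - 1) * (y - 2) ^ 2 - 10 * y * (y + 2)) /
        (y ^ 2 * (y - 2) ^ 2 * root y) := by
  have := (root_pos hy).ne'
  have : y - 2 ≠ 0 := by linarith
  have : y ≠ 0 := by linarith
  unfold logArg logArgDeriv
  field_simp
  ring

lemma deriv_H3_neg (hy : 2 < y) : deriv H3 y < 0 := by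
  rw [(hasDerivAt_H3 hy).deriv]
  refine log_div_two_add_mul_div_neg (one_lt_logArg hy).le ?_
  rw [logArg_sq_sub_one_add_mul_logArgDeriv hy]
  have hroot := root_pos hy
  have hy2 : 0 < y - 2 := by linarith
  refine div_neg_of_neg_of_pos ?_ (by positivity)
  linarith [mul_sq_lt_of_sq_mul_eq (sq_root_mul hy)]

end H3

open H3 in
theorem strictAntiOn_H3 : StrictAntiOn H3 (Set.Ioi 2) := by
  refine strictAntiOn_of_deriv_neg (convex_Ioi 2)
    (fun y hy => (hasDerivAt_H3 hy).continuousAt.continuousWithinAt) fun y hy => ?_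
  rw [interior_Ioi] at hy
  exact deriv_H3_neg hy

theorem H3_decreasing :
    StrictAntiOn H3 (Set.Ici (12 : ℝ)) ∧
      H3 3 > H3 4 ∧ H3 4 > H3 5 ∧ H3 5 > H3 6 ∧ H3 6 > H3 7 ∧ H3 7 > H3 8 ∧
      H3 8 > H3 9 ∧ H3 9 > H3 10 ∧ H3 10 > H3 11 ∧ H3 11 > H3 12 ∧
      ∀ d2 : ℕ, 5 ≤ d2 → H3 (d2 : ℝ) < H3 ((d2 : ℝ) - 2) := by
  have step {a b : ℝ} (ha : 2 < a) (hab : a < b) : H3 b < H3 a :=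
    strictAntiOn_H3 ha (ha.trans hab) hab
  refine ⟨strictAntiOn_H3.mono (Set.Ici_subset_Ioi.2 (by norm_num)), ?_, ?_, ?_, ?_, ?_, ?_, ?_,
    ?_, ?_, fun d2 hd2 => ?_⟩
  iterate 9 exact step (by norm_num) (by norm_num)
  have : (5 : ℝ) ≤ d2 := by exact_mod_cast hd2
  exact step (by linarith) (by linarith)
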